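/- arXiv:1910.02743 — 2 statements merged into one kernel-verified Lean document; each statement's English description precedes it below -/
import Mathlib

section
/- Let s : ℝ → ℝ be the π-periodic function determined by s(φ) = sin φ for φ ∈ [−π/2, π/2) and s(φ + π) = s(φ). Then for every x ∈ ℝ, ∫₀^{2π} s(φ) · σ(x·cos φ + sin φ) dφ = arctan x, where σ(z) = max(z, 0) is the ReLU function. -/
/-!
Put `θ = arctan x`. Then `cos θ · (x cos φ + sin φ) = sin (φ + θ)`, so on the period window
`[-θ, 2π - θ]` the ReLU is the identity on `[-θ, π - θ]` and vanishes on the rest. On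
`[-θ, π - θ]` the function `s` is `sin` up to `π/2` and `-sin` after it, which leaves two
elementary integrals of `sin φ · (x cos φ + sin φ)`; their difference collapses to `θ`
because `x cos θ = sin θ`.
-/

open MeasureTheory Real Set Function

lemma mul_cos_arctan (x : ℝ) : x * cos (arctan x) = sin (arctan x) := by
  rw [sin_arctan, cos_arctan]
  ring

lemma cos_arctan_mul_mul_cos_add_sin (x φ : ℝ) :
    cos (arctan x) * (x * cos φ + sin φ) = sin (φ + arctan x) := by
  rw [sin_add]
  linear_combination cos φ * mul_cos_arctan x

lemma mul_cos_add_sin_nonneg {x φ : ℝ} (h₁ : -arctan x ≤ φ) (h₂ : φ ≤ π - arctan x) :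
    0 ≤ x * cos φ + sin φ := by
  refine (mul_nonneg_iff_of_pos_left (cos_arctan_pos x)).mp ?_
  rw [cos_arctan_mul_mul_cos_add_sin]
  exact sin_nonneg_of_nonneg_of_le_pi (by linarith) (by linarith)

lemma mul_cos_add_sin_nonpos {x φ : ℝ} (h₁ : π - arctan x ≤ φ) (h₂ : φ ≤ 2 * π - arctan x) :
    x * cos φ + sin φ ≤ 0 := by
  refine (mul_nonpos_iff_pos_imp_nonpos.mp ?_).1 (cos_arctan_pos x)
  rw [cos_arctan_mul_mul_cos_add_sin, ← sin_sub_two_pi]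
  exact sin_nonpos_of_nonpos_of_neg_pi_le (by linarith) (by linarith)

lemma integral_sin_mul_mul_cos_add_sin (x a b : ℝ) :
    ∫ φ in a..b, sin φ * (x * cos φ + sin φ) =
      x * (sin b ^ 2 - sin a ^ 2) / 2 + (sin a * cos a - sin b * cos b + b - a) / 2 := by
  have hsplit : (fun φ => sin φ * (x * cos φ + sin φ)) =
      fun φ => x * (sin φ * cos φ) + sin φ ^ 2 := by
    ext φ; ring
  rw [hsplit, intervalIntegral.integral_add (Continuous.intervalIntegrable (by fun_prop) a b)
      (Continuous.intervalIntegrable (by fun_prop) a b),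
    intervalIntegral.integral_const_mul, integral_sin_mul_cos₁, integral_sin_sq]
  ring

lemma integral_sin_mul_mul_cos_add_sin_sub_eq_arctan (x : ℝ) :
    (∫ φ in -arctan x..π / 2, sin φ * (x * cos φ + sin φ)) -
        ∫ φ in π / 2..π - arctan x, sin φ * (x * cos φ + sin φ) = arctan x := by
  simp only [integral_sin_mul_mul_cos_add_sin, sin_neg, cos_neg, sin_pi_sub, cos_pi_sub,
    sin_pi_div_two, cos_pi_div_two]
  linear_combination cos (arctan x) * mul_cos_arctan x - x * sin_sq_add_cos_sq (arctan x)

lemma integral_mul_max_zero_of_nonneg_of_nonpos {f g : ℝ → ℝ} {a b c : ℝ}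
    (hab : a ≤ b) (hbc : b ≤ c)
    (hpos : ∀ φ ∈ Icc a b, 0 ≤ g φ) (hneg : ∀ φ ∈ Icc b c, g φ ≤ 0)
    (hfg : IntervalIntegrable (fun φ => f φ * g φ) volume a b) :
    ∫ φ in a..c, f φ * max (g φ) 0 = ∫ φ in a..b, f φ * g φ := by
  have hab' : EqOn (fun φ => f φ * max (g φ) 0) (fun φ => f φ * g φ) (uIcc a b) := by
    intro φ hφ
    rw [uIcc_of_le hab] at hφ
    simp only [max_eq_left (hpos φ hφ)]
  have hbc' : EqOn (fun φ => f φ * max (g φ) 0) (fun _ => 0) (uIcc b c) := by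
    intro φ hφ
    rw [uIcc_of_le hbc] at hφ
    simp only [max_eq_right (hneg φ hφ), mul_zero]
  rw [← intervalIntegral.integral_add_adjacent_intervals
      (hfg.congr (hab'.symm.mono uIoc_subset_uIcc))
      ((intervalIntegrable_const (c := 0)).congr (hbc'.symm.mono uIoc_subset_uIcc)),
    intervalIntegral.integral_congr hab', intervalIntegral.integral_congr hbc',
    intervalIntegral.integral_zero, add_zero]

section PeriodicSin

variable {s : ℝ → ℝ}

lemma eq_neg_sin_of_periodic (hs : Periodic s π)
    (hs_eq : ∀ φ ∈ Ico (-(π / 2)) (π / 2), s φ = sin φ) {φ : ℝ} (h₁ : π / 2 ≤ φ)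
    (h₂ : φ < 3 * π / 2) : s φ = -sin φ := by
  rw [← hs.sub_eq, hs_eq _ ⟨by linarith, by linarith⟩, sin_sub_pi]

variable {g : ℝ → ℝ} {a b : ℝ}

-- `s (π / 2) = -1`, so `s = sin` only holds on the open interval up to `π / 2`.
lemma eqOn_sin_mul_of_le_pi_div_two (hs_eq : ∀ φ ∈ Ico (-(π / 2)) (π / 2), s φ = sin φ)
    (ha : -(π / 2) ≤ a) (ha' : a ≤ π / 2) :
    EqOn (fun φ => s φ * g φ) (fun φ => sin φ * g φ) (uIoo a (π / 2)) := by
  intro φ hφ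
  rw [uIoo_of_le ha'] at hφ
  simp only [hs_eq φ ⟨by linarith [hφ.1], hφ.2⟩]

lemma eqOn_neg_sin_mul_of_pi_div_two_le (hs : Periodic s π)
    (hs_eq : ∀ φ ∈ Ico (-(π / 2)) (π / 2), s φ = sin φ)
    (hb : π / 2 ≤ b) (hb' : b ≤ 3 * π / 2) :
    EqOn (fun φ => s φ * g φ) (fun φ => -(sin φ * g φ)) (uIoo (π / 2) b) := by
  intro φ hφ
  rw [uIoo_of_le hb] at hφ
  simp only [eq_neg_sin_of_periodic hs hs_eq hφ.1.le (by linarith [hφ.2]), neg_mul]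

lemma intervalIntegrable_mul_of_periodic (hs : Periodic s π)
    (hs_eq : ∀ φ ∈ Ico (-(π / 2)) (π / 2), s φ = sin φ) (hg : Continuous g)
    (ha : -(π / 2) ≤ a) (ha' : a ≤ π / 2) (hb : π / 2 ≤ b) (hb' : b ≤ 3 * π / 2) :
    IntervalIntegrable (fun φ => s φ * g φ) volume a b :=
  ((by fun_prop : Continuous fun φ => sin φ * g φ).intervalIntegrable a (π / 2)).congr_uIoo
      (eqOn_sin_mul_of_le_pi_div_two hs_eq ha ha').symm |>.trans <|
    ((by fun_prop : Continuous fun φ => -(sin φ * g φ)).intervalIntegrable (π / 2) b).congr_uIoo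
      (eqOn_neg_sin_mul_of_pi_div_two_le hs hs_eq hb hb').symm

lemma integral_mul_of_periodic (hs : Periodic s π)
    (hs_eq : ∀ φ ∈ Ico (-(π / 2)) (π / 2), s φ = sin φ) (hg : Continuous g)
    (ha : -(π / 2) ≤ a) (ha' : a ≤ π / 2) (hb : π / 2 ≤ b) (hb' : b ≤ 3 * π / 2) :
    ∫ φ in a..b, s φ * g φ = (∫ φ in a..π / 2, sin φ * g φ) - ∫ φ in π / 2..b, sin φ * g φ := by
  rw [← intervalIntegral.integral_add_adjacent_intervals
      (intervalIntegrable_mul_of_periodic hs hs_eq hg ha ha' (le_refl _) (by linarith))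
      (intervalIntegrable_mul_of_periodic hs hs_eq hg (by linarith) (le_refl _) hb hb'),
    intervalIntegral.integral_congr_uIoo (eqOn_sin_mul_of_le_pi_div_two hs_eq ha ha'),
    intervalIntegral.integral_congr_uIoo (eqOn_neg_sin_mul_of_pi_div_two_le hs hs_eq hb hb'),
    intervalIntegral.integral_neg, sub_eq_add_neg]

end PeriodicSin

/-- Let `s : ℝ → ℝ` be the `π`-periodic function with `s φ = sin φ` on
`[-π/2, π/2)`. Then `∫₀^{2π} s(φ) · σ(x cos φ + sin φ) dφ = arctan x`,
where `σ(z) = max z 0` is the ReLU function. -/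
theorem statement6 (s : ℝ → ℝ)
    (hs_per : ∀ φ : ℝ, s (φ + Real.pi) = s φ)
    (hs_eq : ∀ φ ∈ Set.Ico (-(Real.pi / 2)) (Real.pi / 2), s φ = Real.sin φ)
    (x : ℝ) :
    ∫ φ in (0:ℝ)..(2 * Real.pi),
        s φ * max (x * Real.cos φ + Real.sin φ) 0
      = Real.arctan x := by
  have hs : Periodic s π := hs_per
  have hθ₁ := neg_pi_div_two_lt_arctan x
  have hθ₂ := arctan_lt_pi_div_two x
  have hs₂ : Periodic s (2 * π) := by simpa using hs.nat_mul 2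
  have hper : Periodic (fun φ => s φ * max (x * cos φ + sin φ) 0) (2 * π) := fun φ => by
    simp only [hs₂ φ, cos_add_two_pi, sin_add_two_pi]
  calc _ = ∫ φ in -arctan x..-arctan x + 2 * π, s φ * max (x * cos φ + sin φ) 0 := by
        simpa using hper.intervalIntegral_add_eq 0 (-arctan x)
    _ = ∫ φ in -arctan x..π - arctan x, s φ * (x * cos φ + sin φ) :=
        integral_mul_max_zero_of_nonneg_of_nonpos (by linarith) (by linarith)
          (fun φ hφ => mul_cos_add_sin_nonneg hφ.1 hφ.2)
          (fun φ hφ => mul_cos_add_sin_nonpos hφ.1 (by linarith [hφ.2]))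
          (intervalIntegrable_mul_of_periodic hs hs_eq (by fun_prop) (by linarith) (by linarith)
            (by linarith) (by linarith))
    _ = arctan x := by
        rw [integral_mul_of_periodic hs hs_eq (by fun_prop) (by linarith) (by linarith)
          (by linarith) (by linarith), integral_sin_mul_mul_cos_add_sin_sub_eq_arctan]
end

section
/- Suppose c ∈ L¹[0, 2π] satisfies the four orthogonality conditions ∫_{−π/2}^{π/2} c(φ)·cos φ dφ = ∫_{−π/2}^{π/2} c(φ+π)·cos φ dφ = ∫_{−π/2}^{π/2} c(φ)·sin φ dφ = ∫_{−π/2}^{π/2} c(φ+π)·sin φ dφ = 0 (with c extended 2π-periodically), and let f(x) = ∫₀^{2π} c(φ)·σ(x·cos φ + sin φ) dφ. Then for almost every x ∈ ℝ the second derivative f″(x) exists and equals ( c(−arctan x) + c(−arctan x + π) ) / (1 + x²)^{3/2}. -/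
/-!
Since `x cos φ + sin φ = √(1 + x²) sin (φ + arctan x)`, the kink of the ReLU is met only on a
null set of `φ`, and differentiating under the integral sign gives, for every `x`,
`f' x = ∫_{-arctan x}^{-arctan x + π} c φ cos φ dφ`: the integral of `c cos` over the
half-period where `sin (φ + arctan x) > 0`. By Lebesgue's differentiation theorem
`a ↦ ∫_a^{a+π} c cos` has derivative `c (a + π) cos (a + π) - c a cos a` at almost every `a`,
and preimages of null sets under `arctan` are null, so the chain rule applies at almost every `x`.
-/

open MeasureTheory Real Set Filter

theorem locallyIntegrable_of_forall_intervalIntegrable {E : Type*} [NormedAddCommGroup E]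
    {f : ℝ → E} (hf : ∀ a b, IntervalIntegrable f volume a b) : LocallyIntegrable f volume :=
  fun x => ⟨Icc (x - 1) (x + 1), Icc_mem_nhds (by linarith) (by linarith),
    (intervalIntegrable_iff_integrableOn_Icc_of_le (by linarith)).mp (hf _ _)⟩

theorem MeasureTheory.LocallyIntegrable.ae_hasDerivAt_integral_add_const {E : Type*}
    [NormedAddCommGroup E] [NormedSpace ℝ E] [CompleteSpace E] {f : ℝ → E}
    (hf : LocallyIntegrable f volume) (T : ℝ) :
    ∀ᵐ a, HasDerivAt (fun a => ∫ t in a..a + T, f t) (f (a + T) - f a) a := by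
  have hint (a b : ℝ) : IntervalIntegrable f volume a b :=
    intervalIntegrable_iff.mpr <|
      (hf.integrableOn_isCompact isCompact_uIcc).mono_set uIoc_subset_uIcc
  have hLDT := _root_.LocallyIntegrable.ae_hasDerivAt_integral hf
  filter_upwards [hLDT, (measurePreserving_add_right volume T).quasiMeasurePreserving.ae hLDT]
    with a ha haT
  have hdiff : (fun a => ∫ t in a..a + T, f t)
      = fun a => (∫ t in 0..a + T, f t) - ∫ t in 0..a, f t :=
    funext fun a => (intervalIntegral.integral_interval_sub_left (hint _ _) (hint _ _)).symm
  rw [hdiff]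
  exact ((haT 0).comp_add_const a T).sub (ha 0)

theorem Real.quasiMeasurePreserving_arctan :
    Measure.QuasiMeasurePreserving arctan volume volume := by
  refine ⟨continuous_arctan.measurable, Measure.AbsolutelyContinuous.mk fun s hs hs0 => ?_⟩
  rw [Measure.map_apply continuous_arctan.measurable hs]
  have hsub : arctan ⁻¹' s ⊆ tan '' (s ∩ Ioo (-(π / 2)) (π / 2)) := fun x hx =>
    ⟨arctan x, ⟨hx, neg_pi_div_two_lt_arctan x, arctan_lt_pi_div_two x⟩, tan_arctan x⟩
  refine measure_mono_null hsub (addHaar_image_eq_zero_of_differentiableOn_of_addHaar_eq_zero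
    _ (fun z hz => ?_) (measure_mono_null inter_subset_left hs0))
  exact (differentiableAt_tan.mpr (cos_pos_of_mem_Ioo hz.2).ne').differentiableWithinAt

theorem Real.mul_cos_add_sin_eq (x φ : ℝ) :
    x * cos φ + sin φ = √(1 + x ^ 2) * sin (φ + arctan x) := by
  have hs : 0 < √(1 + x ^ 2) := sqrt_pos.mpr (by positivity)
  rw [sin_add, sin_arctan, cos_arctan]
  field_simp
  ring

theorem Real.one_add_sq_rpow_three_halves (x : ℝ) :
    (1 + x ^ 2) ^ ((3 : ℝ) / 2) = (1 + x ^ 2) / cos (arctan x) := by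
  have hx : (0 : ℝ) < 1 + x ^ 2 := by positivity
  rw [cos_arctan, show (3 : ℝ) / 2 = 1 + 1 / 2 by norm_num, rpow_add hx, rpow_one,
    ← sqrt_eq_rpow, div_div_eq_mul_div, div_one]

theorem hasDerivAt_max_zero_of_ne_zero {y : ℝ} (hy : y ≠ 0) :
    HasDerivAt (fun t => max t 0) (if 0 < y then 1 else 0) y := by
  rcases hy.lt_or_gt with hneg | hpos
  · rw [if_neg hneg.not_gt]
    refine (hasDerivAt_const y 0).congr_of_eventuallyEq ?_
    filter_upwards [Iio_mem_nhds hneg] with t ht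
    exact max_eq_right (le_of_lt ht)
  · rw [if_pos hpos]
    refine (hasDerivAt_id y).congr_of_eventuallyEq ?_
    filter_upwards [Ioi_mem_nhds hpos] with t ht
    exact max_eq_left (le_of_lt ht)

theorem hasDerivAt_intervalIntegral_mul_max_zero {c u v : ℝ → ℝ} {a b x₀ : ℝ}
    (hc : IntervalIntegrable c volume a b) (hu : Continuous u) (hv : Continuous v)
    (hne : ∀ᵐ φ, x₀ * u φ + v φ ≠ 0) :
    HasDerivAt (fun x => ∫ φ in a..b, c φ * max (x * u φ + v φ) 0)
      (∫ φ in a..b, {φ | 0 < x₀ * u φ + v φ}.indicator (fun φ => c φ * u φ) φ)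
      x₀ := by
  have hcu : IntervalIntegrable (fun φ => c φ * u φ) volume a b :=
    hc.mul_continuousOn hu.continuousOn
  have hcm := (intervalIntegrable_iff.mp hc).aestronglyMeasurable
  refine (intervalIntegral.hasDerivAt_integral_of_dominated_loc_of_lip
    (F := fun x φ => c φ * max (x * u φ + v φ) 0) (bound := fun φ => |c φ * u φ|) univ_mem
    (Eventually.of_forall fun x => hcm.mul (by fun_prop))
    (hc.mul_continuousOn (by fun_prop))
    ((intervalIntegrable_iff.mp hcu).aestronglyMeasurable.indicator
      (isOpen_lt continuous_const (by fun_prop)).measurableSet)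
    (Eventually.of_forall fun φ _ => ?_) hcu.abs ?_).2
  · refine LipschitzOnWith.of_dist_le_mul fun x _ y _ => ?_
    rw [dist_eq, dist_eq, ← mul_sub, abs_mul, coe_nnabs, abs_abs, abs_mul, mul_assoc]
    gcongr
    calc |max (x * u φ + v φ) 0 - max (y * u φ + v φ) 0|
        ≤ |x * u φ + v φ - (y * u φ + v φ)| := abs_max_sub_max_le_abs _ _ _
      _ = |u φ| * |x - y| := by rw [← abs_mul]; ring_nf
  · filter_upwards [hne] with φ hφ _
    have := ((hasDerivAt_max_zero_of_ne_zero hφ).comp x₀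
      (((hasDerivAt_id x₀).mul_const (u φ)).add_const (v φ))).const_mul (c φ)
    refine this.congr_deriv ?_
    by_cases h : 0 < x₀ * u φ + v φ <;> simp [h]

theorem Function.Periodic.intervalIntegral_indicator_sin_pos {E : Type*} [NormedAddCommGroup E]
    [NormedSpace ℝ E] {k : ℝ → E} (hk : Periodic k (2 * π)) (s : ℝ) :
    ∫ φ in 0..2 * π, {φ | 0 < sin (φ + s)}.indicator k φ = ∫ φ in -s..-s + π, k φ := by
  have hS : MeasurableSet {φ | 0 < sin (φ + s)} :=
    measurableSet_lt measurable_const (by fun_prop)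
  have hper : Periodic ({φ | 0 < sin (φ + s)}.indicator k) (2 * π) := fun φ => by
    simp only [indicator_apply, mem_ofPred_eq, add_right_comm φ, sin_add_two_pi, hk φ]
  have hset : Ioc (-s) (-s + 2 * π) ∩ {φ | 0 < sin (φ + s)} = Ioo (-s) (-s + π) := by
    ext φ
    simp only [mem_inter_iff, mem_Ioc, mem_Ioo, mem_ofPred_eq]
    refine ⟨fun ⟨⟨h0, h2π⟩, hsin⟩ => ⟨h0, ?_⟩,
      fun ⟨h0, hπ⟩ => ⟨⟨h0, by linarith [pi_pos]⟩,
        sin_pos_of_pos_of_lt_pi (by linarith) (by linarith)⟩⟩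
    by_contra! hπ
    have := sin_nonpos_of_nonpos_of_neg_pi_le (x := φ + s - 2 * π) (by linarith) (by linarith)
    rw [sin_sub_two_pi] at this
    linarith
  rw [← zero_add (2 * π), hper.intervalIntegral_add_eq 0 (-s),
    intervalIntegral.integral_of_le (by linarith [pi_pos]), setIntegral_indicator hS, hset,
    intervalIntegral.integral_of_le (by linarith [pi_pos]), integral_Ioc_eq_integral_Ioo]

theorem Real.ae_mul_cos_add_sin_ne_zero (x : ℝ) : ∀ᵐ φ, x * cos φ + sin φ ≠ 0 := by
  have hcount : {φ | x * cos φ + sin φ = 0}.Countable := by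
    refine (countable_range fun n : ℤ => n * π - arctan x).mono fun φ hφ => ?_
    have hs : 0 < √(1 + x ^ 2) := sqrt_pos.mpr (by positivity)
    rw [mem_ofPred_eq, mul_cos_add_sin_eq, mul_eq_zero, or_iff_right hs.ne', sin_eq_zero_iff] at hφ
    obtain ⟨n, hn⟩ := hφ
    exact ⟨n, by simp only; linarith⟩
  simpa [ae_iff] using hcount.measure_zero volume

theorem statement16_general (c : ℝ → ℝ)
    (hper : Function.Periodic c (2 * Real.pi))
    (hc : IntervalIntegrable c volume 0 (2 * Real.pi))
    (f : ℝ → ℝ)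
    (hf : ∀ x : ℝ, f x =
      ∫ φ in (0:ℝ)..(2 * Real.pi), c φ * max (x * Real.cos φ + Real.sin φ) 0) :
    ∀ᵐ x : ℝ,
      HasDerivAt (deriv f)
        ((c (-Real.arctan x) + c (-Real.arctan x + Real.pi)) / (1 + x ^ 2) ^ ((3:ℝ)/2))
        x := by
  set k : ℝ → ℝ := fun φ => c φ * cos φ
  have hk_per : Function.Periodic k (2 * π) := fun φ => by simp only [k, hper φ, cos_add_two_pi]
  have hk_int : ∀ a b, IntervalIntegrable k volume a b :=
    hk_per.intervalIntegrable₀ (by positivity) (hc.mul_continuousOn continuous_cos.continuousOn)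
  have hf' (x : ℝ) : HasDerivAt f (∫ φ in -arctan x..-arctan x + π, k φ) x := by
    have hpos : {φ | 0 < x * cos φ + sin φ} = {φ | 0 < sin (φ + arctan x)} := by
      ext φ
      rw [mem_ofPred_eq, mem_ofPred_eq, mul_cos_add_sin_eq,
        mul_pos_iff_of_pos_left (sqrt_pos.mpr (by positivity))]
    have := hasDerivAt_intervalIntegral_mul_max_zero hc continuous_cos continuous_sin
      (ae_mul_cos_add_sin_ne_zero x)
    rw [hpos] at this
    rw [← hk_per.intervalIntegral_indicator_sin_pos, funext hf]
    exact this
  have hG : ∀ᵐ x, HasDerivAt (fun a => ∫ t in a..a + π, k t)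
      (k (-arctan x + π) - k (-arctan x)) (-arctan x) :=
    ((Measure.measurePreserving_neg volume).quasiMeasurePreserving.comp
      quasiMeasurePreserving_arctan).ae
      ((locallyIntegrable_of_forall_intervalIntegrable hk_int).ae_hasDerivAt_integral_add_const π)
  filter_upwards [hG] with x hx
  have hderiv : deriv f = fun x => ∫ t in -arctan x..-arctan x + π, k t :=
    funext fun x => (hf' x).deriv
  rw [hderiv]
  refine (hx.comp x (hasDerivAt_arctan x).neg).congr_deriv ?_
  have hcos : cos (arctan x) ≠ 0 := (cos_arctan_pos x).ne'
  rw [one_add_sq_rpow_three_halves]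
  simp only [k, cos_neg, neg_add_eq_sub, cos_pi_sub]
  field_simp
  ring

/-- If `c ∈ L¹[0,2π]` (extended `2π`-periodically) satisfies the four
orthogonality conditions and `f(x) = ∫₀^{2π} c(φ) σ(x cos φ + sin φ) dφ`, then for almost
every `x ∈ ℝ` the second derivative `f''(x)` exists and equals
`(c(-arctan x) + c(-arctan x + π)) / (1 + x²)^{3/2}`. -/
theorem statement16 (c : ℝ → ℝ)
    (hper : Function.Periodic c (2 * Real.pi))
    (hc : IntervalIntegrable c volume 0 (2 * Real.pi))
    (h1 : ∫ φ in (-(Real.pi/2))..(Real.pi/2), c φ * Real.cos φ = 0)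
    (h2 : ∫ φ in (-(Real.pi/2))..(Real.pi/2), c (φ + Real.pi) * Real.cos φ = 0)
    (h3 : ∫ φ in (-(Real.pi/2))..(Real.pi/2), c φ * Real.sin φ = 0)
    (h4 : ∫ φ in (-(Real.pi/2))..(Real.pi/2), c (φ + Real.pi) * Real.sin φ = 0)
    (f : ℝ → ℝ)
    (hf : ∀ x : ℝ, f x =
      ∫ φ in (0:ℝ)..(2 * Real.pi), c φ * max (x * Real.cos φ + Real.sin φ) 0) :
    ∀ᵐ x : ℝ,
      HasDerivAt (deriv f)
        ((c (-Real.arctan x) + c (-Real.arctan x + Real.pi)) / (1 + x ^ 2) ^ ((3:ℝ)/2))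
        x :=
  statement16_general c hper hc f hf
end
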